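/- Consider the control system (x₁,x₂)' = [[1,1],[0,1]](x₁,x₂) + (1,0)u on [0,∞) with the quadratic form Q(x₁,x₂,u) := (1/2)(2x₁² + 2x₁x₂ + x₂² + 2(x₁+x₂)u + u²). Fix x₀ = (x₁⁰, 0) ∈ ℝ². Then the pair given by x̂(t) := (x₁⁰ e^{−t}, 0) and û(t) := −2x₁⁰ e^{−t} solves the control system with x̂(0) = x₀, belongs to L²([0,∞),ℝ²)×L²([0,∞),ℝ), and satisfies ∫₀^∞ Q(x̂₁(t), x̂₂(t), û(t)) dt = (x₁⁰)²/2; moreover, every pair (x,u) with x locally absolutely continuous solving the system with x(0) = x₀ and x ∈ L²([0,∞),ℝ²), u ∈ L²([0,∞),ℝ) satisfies ∫₀^∞ Q(x₁(t), x₂(t), u(t)) dt ≥ (x₁⁰)²/2. -/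

import Mathlib

/-! With `v := x₁ + x₂ + u = x₁'` the cost density is `Q = (v² + x₁²)/2`, and
`Q + x₁ v = (v + x₁)²/2 ≥ 0`. Integration by parts for the absolutely continuous `x₁`
gives `∫₀ᵀ x₁ v = (x₁(T)² − (x₁⁰)²)/2`, so the cost on `[0, T]` is at least
`((x₁⁰)² − x₁(T)²)/2`; as `x₁ ∈ L²`, `x₁(T)²` is arbitrarily small for suitable `T`.
The candidate has `v = −x₁`, hence attains the bound. -/

open MeasureTheory Matrix Filter

/-- The quadratic form `Q(x₁,x₂,u) = (1/2)(2x₁² + 2x₁x₂ + x₂² + 2(x₁+x₂)u + u²)` of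
Example 3.5. -/
noncomputable def Qex (x1 x2 u : ℝ) : ℝ :=
  (1/2) * (2 * x1 ^ 2 + 2 * x1 * x2 + x2 ^ 2 + 2 * (x1 + x2) * u + u ^ 2)

/-- `(x,u)` solves the control system `(x₁,x₂)' = [[1,1],[0,1]](x₁,x₂) + (1,0)u` on
`[0,∞)` with `x(0) = x₀` (`x` locally absolutely continuous, equation a.e., expressed
through the equivalent integral equation). -/
def SolvesEx (x₀ : Fin 2 → ℝ) (x : ℝ → Fin 2 → ℝ) (u : ℝ → ℝ) : Prop :=
  x 0 = x₀ ∧ LocallyIntegrableOn u (Set.Ici 0) ∧ ContinuousOn x (Set.Ici 0) ∧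
    ∀ t ∈ Set.Ici (0:ℝ), x t = x₀ + ∫ s in (0:ℝ)..t, ![x s 0 + x s 1 + u s, x s 1]

open Set

theorem integral_primitive_mul_eq_sq_sub_sq {v : ℝ → ℝ} {a b : ℝ} (c : ℝ)
    (hv : IntervalIntegrable v volume a b) :
    ∫ s in a..b, (c + ∫ r in a..s, v r) * v s = ((c + ∫ r in a..b, v r) ^ 2 - c ^ 2) / 2 := by
  set F : ℝ → ℝ := fun s ↦ c + ∫ r in a..s, v r
  have hF : AbsolutelyContinuousOnInterval F a b :=
    contDiffOn_const.absolutelyContinuousOnInterval.fun_add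
      (hv.absolutelyContinuousOnInterval_intervalIntegral left_mem_uIcc)
  have hderiv : ∫ s in a..b, F s * deriv F s = ∫ s in a..b, F s * v s := by
    refine intervalIntegral.integral_congr_ae ?_
    filter_upwards [hv.ae_hasDerivAt_integral] with s hs hs'
    rw [((hs (uIoc_subset_uIcc hs') a left_mem_uIcc).const_add c).deriv]
  have hparts := hF.integral_mul_deriv_eq_deriv_mul hF
  simp_rw [hderiv, mul_comm (deriv F _), hderiv] at hparts
  have hFa : F a = c := by simp [F]
  rw [hFa] at hparts
  change _ = ((F b) ^ 2 - c ^ 2) / 2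
  linarith

theorem exists_norm_lt_of_integrableOn_Ioi {E : Type*} [NormedAddCommGroup E] {g : ℝ → E}
    {a ε : ℝ} (hg : IntegrableOn g (Ioi a)) (hε : 0 < ε) : ∃ t > a, ‖g t‖ < ε := by
  by_contra! h
  have hfin := hg.measure_norm_ge_lt_top hε
  have hsub : Ioi a ⊆ {t | ε ≤ ‖g t‖} := fun t ht ↦ h t ht
  rw [Measure.restrict_apply' measurableSet_Ioi, inter_eq_right.2 hsub, Real.volume_Ioi] at hfin
  exact hfin.false

theorem sq_sub_sq_le_integral_sq_add_sq {f v : ℝ → ℝ} {a b c : ℝ} (hab : a ≤ b)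
    (hv : IntervalIntegrable v volume a b)
    (hv2 : IntervalIntegrable (fun t ↦ v t ^ 2) volume a b)
    (hf : ∀ t ∈ Icc a b, f t = c + ∫ s in a..t, v s) :
    (c ^ 2 - f b ^ 2) / 2 ≤ ∫ t in a..b, (v t ^ 2 + f t ^ 2) / 2 := by
  have hfc : ContinuousOn f (uIcc a b) := by
    refine ((intervalIntegral.continuousOn_primitive_interval' hv left_mem_uIcc).const_add c).congr
      fun t ht ↦ hf t ?_
    rwa [uIcc_of_le hab] at ht
  have hfv : ∫ t in a..b, f t * v t = (f b ^ 2 - c ^ 2) / 2 := by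
    rw [hf b (right_mem_Icc.2 hab), ← integral_primitive_mul_eq_sq_sub_sq c hv]
    refine intervalIntegral.integral_congr fun t ht ↦ ?_
    rw [uIcc_of_le hab] at ht
    simp only [hf t ht]
  calc (c ^ 2 - f b ^ 2) / 2 = ∫ t in a..b, -(f t * v t) := by
        rw [intervalIntegral.integral_neg, hfv]; ring
    _ ≤ ∫ t in a..b, (v t ^ 2 + f t ^ 2) / 2 := by
      refine intervalIntegral.integral_mono_on hab (hv.continuousOn_mul hfc).neg
        ((hv2.add (hfc.pow 2).intervalIntegrable).div_const 2) fun t _ ↦ ?_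
      nlinarith [sq_nonneg (f t + v t)]

theorem MeasureTheory.LocallyIntegrableOn.intervalIntegrable_of_Ici {f : ℝ → ℝ} {a b : ℝ}
    (hf : LocallyIntegrableOn f (Ici a)) (hab : a ≤ b) : IntervalIntegrable f volume a b :=
  (intervalIntegrable_iff_integrableOn_Icc_of_le hab).2
    (hf.integrableOn_compact_subset Icc_subset_Ici_self isCompact_Icc)

theorem sq_div_two_le_integral_sq_add_sq {f v : ℝ → ℝ} {c : ℝ}
    (hv : LocallyIntegrableOn v (Ici 0))
    (hf : ∀ t ≥ 0, f t = c + ∫ s in (0 : ℝ)..t, v s)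
    (hf2 : MemLp f 2 (volume.restrict (Ioi 0))) (hv2 : MemLp v 2 (volume.restrict (Ioi 0))) :
    c ^ 2 / 2 ≤ ∫ t in Ioi 0, (v t ^ 2 + f t ^ 2) / 2 := by
  have hfsq : IntegrableOn (fun t ↦ f t ^ 2) (Ioi 0) := hf2.integrable_sq
  have hvsq : IntegrableOn (fun t ↦ v t ^ 2) (Ioi 0) := hv2.integrable_sq
  have hQ : IntegrableOn (fun t ↦ (v t ^ 2 + f t ^ 2) / 2) (Ioi 0) := (hvsq.add hfsq).div_const 2
  refine le_of_forall_pos_lt_add fun ε hε ↦ ?_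
  obtain ⟨T, hT, hfT⟩ := exists_norm_lt_of_integrableOn_Ioi hfsq (by positivity : 0 < 2 * ε)
  rw [Real.norm_of_nonneg (sq_nonneg _)] at hfT
  have hfinite := sq_sub_sq_le_integral_sq_add_sq hT.le (hv.intervalIntegrable_of_Ici hT.le)
    ((intervalIntegrable_iff_integrableOn_Ioc_of_le hT.le).2 (hvsq.mono_set Ioc_subset_Ioi_self))
    fun t ht ↦ hf t ht.1
  have hmono : ∫ t in (0 : ℝ)..T, (v t ^ 2 + f t ^ 2) / 2
      ≤ ∫ t in Ioi 0, (v t ^ 2 + f t ^ 2) / 2 := by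
    rw [intervalIntegral.integral_of_le hT.le]
    exact setIntegral_mono_set hQ (ae_of_all _ fun t ↦ by positivity)
      Ioc_subset_Ioi_self.eventuallyLE
  linarith

theorem Qex_eq_half_sq_add_sq (x1 x2 u : ℝ) : Qex x1 x2 u = ((x1 + x2 + u) ^ 2 + x1 ^ 2) / 2 := by
  unfold Qex; ring

theorem solvesEx_of_hasDerivAt {x : ℝ → Fin 2 → ℝ} {u : ℝ → ℝ} (hu : Continuous u)
    (hx : ∀ t, HasDerivAt x ![x t 0 + x t 1 + u t, x t 1] t) : SolvesEx (x 0) x u := by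
  have hxc : Continuous x := continuous_iff_continuousAt.2 fun t ↦ (hx t).continuousAt
  refine ⟨rfl, hu.locallyIntegrable.locallyIntegrableOn _, hxc.continuousOn, fun t _ ↦ ?_⟩
  have hrhs : Continuous fun s ↦ ![x s 0 + x s 1 + u s, x s 1] := by fun_prop
  rw [intervalIntegral.integral_eq_sub_of_hasDerivAt (fun s _ ↦ hx s)
    (hrhs.intervalIntegrable _ _)]
  abel

namespace SolvesEx

variable {x₀ : Fin 2 → ℝ} {x : ℝ → Fin 2 → ℝ} {u : ℝ → ℝ}

theorem locallyIntegrableOn_fst_rhs (h : SolvesEx x₀ x u) :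
    LocallyIntegrableOn (fun s ↦ x s 0 + x s 1 + u s) (Ici 0) := by
  obtain ⟨-, hu, hx, -⟩ := h
  exact ((((continuous_apply 0).comp_continuousOn hx).add
    ((continuous_apply 1).comp_continuousOn hx)).locallyIntegrableOn measurableSet_Ici).add hu

theorem fst_eq_add_integral (h : SolvesEx x₀ x u) {t : ℝ} (ht : 0 ≤ t) :
    x t 0 = x₀ 0 + ∫ s in (0 : ℝ)..t, (x s 0 + x s 1 + u s) := by
  have hv := h.locallyIntegrableOn_fst_rhs
  obtain ⟨-, -, hx, heq⟩ := h
  have hrhs : IntervalIntegrable (fun s ↦ ![x s 0 + x s 1 + u s, x s 1]) volume 0 t := by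
    rw [intervalIntegrable_iff_integrableOn_Ioc_of_le ht, IntegrableOn, integrable_pi_iff,
      Fin.forall_fin_two]
    exact ⟨(hv.intervalIntegrable_of_Ici ht).1,
      ((((continuous_apply 1).comp_continuousOn hx).mono Icc_subset_Ici_self).integrableOn_Icc
        ).mono_set Ioc_subset_Icc_self⟩
  rw [heq t ht, Pi.add_apply]
  exact congrArg _ ((ContinuousLinearMap.proj (R := ℝ) (φ := fun _ : Fin 2 ↦ ℝ) 0
    ).intervalIntegral_comp_comm hrhs).symm

end SolvesEx

theorem memLp_two_const_mul_exp_neg (c : ℝ) :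
    MemLp (fun t ↦ c * Real.exp (-t)) 2 (volume.restrict (Ioi 0)) := by
  refine (memLp_two_iff_integrable_sq (by fun_prop : Continuous _).aestronglyMeasurable).2 ?_
  refine ((integrableOn_exp_mul_Ioi (by norm_num : (-2 : ℝ) < 0) 0).const_mul (c ^ 2)).congr
    (ae_of_all _ fun t ↦ ?_)
  simp only [mul_pow, ← Real.exp_nat_mul]
  ring_nf

/-- For the initial state `x₀ = (x₁⁰, 0)`, the pair
`x̂(t) = (x₁⁰e^{−t}, 0)`, `û(t) = −2x₁⁰e^{−t}` solves the control system, is admissible,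
its cost equals `(x₁⁰)²/2`, and every admissible solving pair has cost `≥ (x₁⁰)²/2`. -/
theorem example_solvable (x₁0 : ℝ) :
    SolvesEx ![x₁0, 0] (fun t => ![x₁0 * Real.exp (-t), 0])
      (fun t => -2 * x₁0 * Real.exp (-t)) ∧
    MemLp (fun t => ![x₁0 * Real.exp (-t), (0:ℝ)]) 2 (volume.restrict (Set.Ioi 0)) ∧
    MemLp (fun t => -2 * x₁0 * Real.exp (-t)) 2 (volume.restrict (Set.Ioi 0)) ∧
    (∫ t in Set.Ioi (0:ℝ),
        Qex (x₁0 * Real.exp (-t)) 0 (-2 * x₁0 * Real.exp (-t))) = x₁0 ^ 2 / 2 ∧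
    ∀ (x : ℝ → Fin 2 → ℝ) (u : ℝ → ℝ), SolvesEx ![x₁0, 0] x u →
      MemLp x 2 (volume.restrict (Set.Ioi 0)) →
      MemLp u 2 (volume.restrict (Set.Ioi 0)) →
      x₁0 ^ 2 / 2 ≤ ∫ t in Set.Ioi (0:ℝ), Qex (x t 0) (x t 1) (u t) := by
  refine ⟨?_, ?_, memLp_two_const_mul_exp_neg _, ?_, fun x u hsol hx hu ↦ ?_⟩
  · have hderiv (t : ℝ) : HasDerivAt (fun t ↦ ![x₁0 * Real.exp (-t), 0])
        ![x₁0 * Real.exp (-t) + 0 + -2 * x₁0 * Real.exp (-t), 0] t := by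
      refine hasDerivAt_pi.2 (Fin.forall_fin_two.2 ⟨?_, hasDerivAt_const _ _⟩)
      simp only [Matrix.cons_val_zero]
      exact ((hasDerivAt_neg t).exp.const_mul x₁0).congr_deriv (by ring)
    convert solvesEx_of_hasDerivAt (by fun_prop) hderiv using 1
    simp
  · exact memLp_pi_iff.2 (Fin.forall_fin_two.2 ⟨memLp_two_const_mul_exp_neg x₁0, MemLp.zero⟩)
  · have hQ (t : ℝ) : Qex (x₁0 * Real.exp (-t)) 0 (-2 * x₁0 * Real.exp (-t))
        = x₁0 ^ 2 * Real.exp (-2 * t) := by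
      rw [Qex_eq_half_sq_add_sq, show -2 * t = -t + -t by ring, Real.exp_add]; ring
    simp_rw [hQ, integral_const_mul, integral_exp_mul_Ioi (by norm_num : (-2 : ℝ) < 0)]
    norm_num [mul_one_div]
  · simp_rw [Qex_eq_half_sq_add_sq]
    simpa using sq_div_two_le_integral_sq_add_sq hsol.locallyIntegrableOn_fst_rhs
      (fun t ht ↦ hsol.fst_eq_add_integral ht) (memLp_pi_iff.1 hx 0)
      (((memLp_pi_iff.1 hx 0).add (memLp_pi_iff.1 hx 1)).add hu)
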